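/- arXiv:2010.01156 — 12 statements merged into one kernel-verified Lean document; each statement's English description precedes it below -/
import Mathlib

section
/- Let K be a field of characteristic 0, A an associative algebra over K, M an A-bimodule, H a Hochschild 2-cocycle, and T : M → A an H-twisted Rota-Baxter operator. If h : A → M is a K-linear map such that id_M − h∘T : M → M is invertible, then the composite T∘(id_M − h∘T)^{-1} : M → A is an (H + δh)-twisted Rota-Baxter operator. -/
/-- If T is an H-twisted Rota-Baxter operator and id - h∘T is invertible,
then T ∘ (id - h∘T)⁻¹ is an (H + δh)-twisted Rota-Baxter operator. -/
theorem stmt_3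
    (K : Type*) [Field K] [CharZero K]
    (A : Type*) [AddCommGroup A] [Module K A]
    (M : Type*) [AddCommGroup M] [Module K M]
    (mul : A →ₗ[K] A →ₗ[K] A)
    (hmul : ∀ a b c : A, mul (mul a b) c = mul a (mul b c))
    (l : A →ₗ[K] M →ₗ[K] M) (r : M →ₗ[K] A →ₗ[K] M)
    (hlm : ∀ (a b : A) (u : M), l (mul a b) u = l a (l b u))
    (hlr : ∀ (a : A) (u : M) (b : A), r (l a u) b = l a (r u b))
    (hrm : ∀ (u : M) (a b : A), r (r u a) b = r u (mul a b))
    (H : A →ₗ[K] A →ₗ[K] M)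
    (hH : ∀ a b c : A, l a (H b c) - H (mul a b) c + H a (mul b c) - r (H a b) c = 0)
    (T : M →ₗ[K] A)
    (hT : ∀ u v : M,
      mul (T u) (T v) = T (r u (T v) + l (T u) v + H (T u) (T v)))
    (h : A →ₗ[K] M)
    -- g is the (linear) inverse of id_M - h∘T
    (g : M →ₗ[K] M)
    (hg1 : ∀ u : M, g u - h (T (g u)) = u)
    (hg2 : ∀ u : M, g (u - h (T u)) = u) :
    ∀ u v : M,
      mul (T (g u)) (T (g v))
        = T (g (r u (T (g v)) + l (T (g u)) v
            + (H (T (g u)) (T (g v))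
              + (l (T (g u)) (h (T (g v)))
                - h (mul (T (g u)) (T (g v)))
                + r (h (T (g u))) (T (g v)))))) := by
  intro u v
  have e1 : r u (T (g v)) = r (g u) (T (g v)) - r (h (T (g u))) (T (g v)) := by
    conv_lhs => rw [← hg1 u]
    simp
  have e2 : l (T (g u)) v = l (T (g u)) (g v) - l (T (g u)) (h (T (g v))) := by
    conv_lhs => rw [← hg1 v]
    simp
  have key : r u (T (g v)) + l (T (g u)) v
            + (H (T (g u)) (T (g v))
              + (l (T (g u)) (h (T (g v)))
                - h (mul (T (g u)) (T (g v)))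
                + r (h (T (g u))) (T (g v))))
      = (r (g u) (T (g v)) + l (T (g u)) (g v) + H (T (g u)) (T (g v)))
        - h (T (r (g u) (T (g v)) + l (T (g u)) (g v) + H (T (g u)) (T (g v)))) := by
    rw [← hT, e1, e2]
    abel
  rw [key, hg2]
  exact hT (g u) (g v)
end

section
/- Let K be a field of characteristic 0, A an associative algebra over K, M an A-bimodule, H a Hochschild 2-cocycle, and T : M → A an H-twisted Rota-Baxter operator. If B : A → M is a Hochschild 1-cocycle such that id_M + B∘T : M → M is invertible (B is T-admissible), then the gauge transformation T_B := T∘(id_M + B∘T)^{-1} : M → A is again an H-twisted Rota-Baxter operator. -/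
/-- The gauge transformation T_B = T ∘ (id + B∘T)⁻¹ of an H-twisted
Rota-Baxter operator by a T-admissible 1-cocycle B is again an H-twisted
Rota-Baxter operator. -/
theorem stmt_4
    (K : Type*) [Field K] [CharZero K]
    (A : Type*) [AddCommGroup A] [Module K A]
    (M : Type*) [AddCommGroup M] [Module K M]
    (mul : A →ₗ[K] A →ₗ[K] A)
    (hmul : ∀ a b c : A, mul (mul a b) c = mul a (mul b c))
    (l : A →ₗ[K] M →ₗ[K] M) (r : M →ₗ[K] A →ₗ[K] M)
    (hlm : ∀ (a b : A) (u : M), l (mul a b) u = l a (l b u))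
    (hlr : ∀ (a : A) (u : M) (b : A), r (l a u) b = l a (r u b))
    (hrm : ∀ (u : M) (a b : A), r (r u a) b = r u (mul a b))
    (H : A →ₗ[K] A →ₗ[K] M)
    (hH : ∀ a b c : A, l a (H b c) - H (mul a b) c + H a (mul b c) - r (H a b) c = 0)
    (T : M →ₗ[K] A)
    (hT : ∀ u v : M,
      mul (T u) (T v) = T (r u (T v) + l (T u) v + H (T u) (T v)))
    (B : A →ₗ[K] M)
    (hB : ∀ a b : A, l a (B b) - B (mul a b) + r (B a) b = 0)
    -- g is the (linear) inverse of id_M + B∘T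
    (g : M →ₗ[K] M)
    (hg1 : ∀ u : M, g u + B (T (g u)) = u)
    (hg2 : ∀ u : M, g (u + B (T u)) = u) :
    ∀ u v : M,
      mul (T (g u)) (T (g v))
        = T (g (r u (T (g v)) + l (T (g u)) v + H (T (g u)) (T (g v)))) := by
  intro u v
  have h2 : ∀ a b : A, l a (B b) + r (B a) b = B (mul a b) := fun a b =>
    eq_of_sub_eq_zero (by rw [← hB a b]; abel)
  have key : ∀ p q : M,
      r (p + B (T p)) (T q) + l (T p) (q + B (T q)) + H (T p) (T q)
        = (r p (T q) + l (T p) q + H (T p) (T q))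
          + B (T (r p (T q) + l (T p) q + H (T p) (T q))) := by
    intro p q
    rw [← hT, ← h2]
    simp only [map_add, LinearMap.add_apply]
    abel
  have hu : u = g u + B (T (g u)) := (hg1 u).symm
  have hv : v = g v + B (T (g v)) := (hg1 v).symm
  rw [hT]
  rw [hu, hv]
  simp only [hg2]
  rw [key (g u) (g v), hg2]
end

section
/- Let K be a field of characteristic 0, A an associative algebra over K, M an A-bimodule, H a Hochschild 2-cocycle, T : M → A an H-twisted Rota-Baxter operator, and B : A → M a Hochschild 1-cocycle with id_M + B∘T invertible, so that T_B := T∘(id_M + B∘T)^{-1} is again an H-twisted Rota-Baxter operator. Then id_M + B∘T is an algebra isomorphism from (M, *) to (M, *_B); that is, (id_M + B∘T)(u * v) = (id_M + B∘T)(u) *_B (id_M + B∘T)(v) for all u,v ∈ M, where u * v = u·T(v) + T(u)·v + H(Tu,Tv) and u *_B v = u·T_B(v) + T_B(u)·v + H(T_B u, T_B v). -/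
/-- id + B∘T is an algebra isomorphism from (M,*) (induced by T) to
(M,*_B) (induced by the gauge transformed operator T_B = T ∘ (id + B∘T)⁻¹). -/
theorem stmt_5
    (K : Type*) [Field K] [CharZero K]
    (A : Type*) [AddCommGroup A] [Module K A]
    (M : Type*) [AddCommGroup M] [Module K M]
    (mul : A →ₗ[K] A →ₗ[K] A)
    (hmul : ∀ a b c : A, mul (mul a b) c = mul a (mul b c))
    (l : A →ₗ[K] M →ₗ[K] M) (r : M →ₗ[K] A →ₗ[K] M)
    (hlm : ∀ (a b : A) (u : M), l (mul a b) u = l a (l b u))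
    (hlr : ∀ (a : A) (u : M) (b : A), r (l a u) b = l a (r u b))
    (hrm : ∀ (u : M) (a b : A), r (r u a) b = r u (mul a b))
    (H : A →ₗ[K] A →ₗ[K] M)
    (hH : ∀ a b c : A, l a (H b c) - H (mul a b) c + H a (mul b c) - r (H a b) c = 0)
    (T : M →ₗ[K] A)
    (hT : ∀ u v : M,
      mul (T u) (T v) = T (r u (T v) + l (T u) v + H (T u) (T v)))
    (B : A →ₗ[K] M)
    (hB : ∀ a b : A, l a (B b) - B (mul a b) + r (B a) b = 0)
    -- g is the (linear) inverse of id_M + B∘T, so that T_B = T ∘ g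
    (g : M →ₗ[K] M)
    (hg1 : ∀ u : M, g u + B (T (g u)) = u)
    (hg2 : ∀ u : M, g (u + B (T u)) = u)
    (TB : M → A) (hTB : ∀ u : M, TB u = T (g u))
    (star : M → M → M)
    (hstar : ∀ u v : M, star u v = r u (T v) + l (T u) v + H (T u) (T v))
    (starB : M → M → M)
    (hstarB : ∀ u v : M,
      starB u v = r u (TB v) + l (TB u) v + H (TB u) (TB v))
    (S : M → M) (hS : ∀ u : M, S u = u + B (T u)) :
    ∀ u v : M, S (star u v) = starB (S u) (S v) := by
  intro u v
  have hgS : ∀ w : M, g (S w) = w := fun w => by rw [hS]; exact hg2 w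
  have hB' : B (mul (T u) (T v)) = l (T u) (B (T v)) + r (B (T u)) (T v) := by
    have h := hB (T u) (T v)
    rw [eq_comm, ← sub_eq_zero, ← h]; abel
  rw [hS, hstar, ← hT, hstarB, hTB, hTB, hgS, hgS, hS, hS, hB']
  simp only [map_add, LinearMap.add_apply]
  abel
end

section
/- Let K be a field of characteristic 0, A an associative algebra over K, M an A-bimodule, H a Hochschild 2-cocycle, and T : M → A an H-twisted Rota-Baxter operator. Then the K-bilinear product on M defined by u * v = u·T(v) + T(u)·v + H(Tu,Tv) is associative, so (M, *) is an associative algebra. -/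
/-- The product u * v = u·T(v) + T(u)·v + H(Tu,Tv) induced on M by an
H-twisted Rota-Baxter operator T is associative. -/
theorem stmt_6
    (K : Type*) [Field K] [CharZero K]
    (A : Type*) [AddCommGroup A] [Module K A]
    (M : Type*) [AddCommGroup M] [Module K M]
    (mul : A →ₗ[K] A →ₗ[K] A)
    (hmul : ∀ a b c : A, mul (mul a b) c = mul a (mul b c))
    (l : A →ₗ[K] M →ₗ[K] M) (r : M →ₗ[K] A →ₗ[K] M)
    (hlm : ∀ (a b : A) (u : M), l (mul a b) u = l a (l b u))
    (hlr : ∀ (a : A) (u : M) (b : A), r (l a u) b = l a (r u b))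
    (hrm : ∀ (u : M) (a b : A), r (r u a) b = r u (mul a b))
    (H : A →ₗ[K] A →ₗ[K] M)
    (hH : ∀ a b c : A, l a (H b c) - H (mul a b) c + H a (mul b c) - r (H a b) c = 0)
    (T : M →ₗ[K] A)
    (hT : ∀ u v : M,
      mul (T u) (T v) = T (r u (T v) + l (T u) v + H (T u) (T v)))
    (star : M → M → M)
    (hstar : ∀ u v : M, star u v = r u (T v) + l (T u) v + H (T u) (T v)) :
    ∀ u v w : M, star (star u v) w = star u (star v w) := by
  intro u v w
  have hTuv : T (star u v) = mul (T u) (T v) := by rw [hstar]; exact (hT u v).symm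
  have hTvw : T (star v w) = mul (T v) (T w) := by rw [hstar]; exact (hT v w).symm
  have hc := hH (T u) (T v) (T w)
  rw [hstar (star u v) w, hstar u (star v w), hstar u v, hstar v w, ← hT u v, ← hT v w]
  simp only [map_add, LinearMap.add_apply]
  rw [hrm, hlr, hlm]
  have hc' : r (H (T u) (T v)) (T w) + H (mul (T u) (T v)) (T w)
      = l (T u) (H (T v) (T w)) + H (T u) (mul (T v) (T w)) := by
    linear_combination (norm := abel) -hc
  linear_combination (norm := abel) hc'
end

section
/- Let K be a field of characteristic 0, A an associative algebra over K, M an A-bimodule, H a Hochschild 2-cocycle, and T : M → A an H-twisted Rota-Baxter operator. Then the bilinear operations on M defined by u ≺ v = u·T(v), u ≻ v = T(u)·v, and u ⋎ v = H(Tu, Tv) make M an NS-algebra; that is, writing u * v = u≺v + u≻v + u⋎v, for all u,v,w ∈ M: (u≺v)≺w = u≺(v*w); (u≻v)≺w = u≻(v≺w); (u*v)≻w = u≻(v≻w); and (u⋎v)≺w + (u*v)⋎w = u≻(v⋎w) + u⋎(v*w). -/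
/-- An H-twisted Rota-Baxter operator T : M → A induces an NS-algebra
structure on M by u ≺ v = u·T(v), u ≻ v = T(u)·v, u ⋎ v = H(Tu,Tv). -/
theorem stmt_7
    (K : Type*) [Field K] [CharZero K]
    (A : Type*) [AddCommGroup A] [Module K A]
    (M : Type*) [AddCommGroup M] [Module K M]
    (mul : A →ₗ[K] A →ₗ[K] A)
    (hmul : ∀ a b c : A, mul (mul a b) c = mul a (mul b c))
    (l : A →ₗ[K] M →ₗ[K] M) (r : M →ₗ[K] A →ₗ[K] M)
    (hlm : ∀ (a b : A) (u : M), l (mul a b) u = l a (l b u))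
    (hlr : ∀ (a : A) (u : M) (b : A), r (l a u) b = l a (r u b))
    (hrm : ∀ (u : M) (a b : A), r (r u a) b = r u (mul a b))
    (H : A →ₗ[K] A →ₗ[K] M)
    (hH : ∀ a b c : A, l a (H b c) - H (mul a b) c + H a (mul b c) - r (H a b) c = 0)
    (T : M →ₗ[K] A)
    (hT : ∀ u v : M,
      mul (T u) (T v) = T (r u (T v) + l (T u) v + H (T u) (T v)))
    (prec succ vee star : M → M → M)
    (hprec : ∀ u v : M, prec u v = r u (T v))
    (hsucc : ∀ u v : M, succ u v = l (T u) v)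
    (hvee : ∀ u v : M, vee u v = H (T u) (T v))
    (hstar : ∀ u v : M, star u v = prec u v + succ u v + vee u v) :
    ∀ u v w : M,
      prec (prec u v) w = prec u (star v w)
      ∧ prec (succ u v) w = succ u (prec v w)
      ∧ succ (star u v) w = succ u (succ v w)
      ∧ prec (vee u v) w + vee (star u v) w
          = succ u (vee v w) + vee u (star v w) := by
  have key : ∀ u v : M, T (star u v) = mul (T u) (T v) := by
    intro u v
    rw [hstar, hprec, hsucc, hvee]
    exact (hT u v).symm
  intro u v w
  refine ⟨?_, ?_, ?_, ?_⟩
  · rw [hprec, hprec, hprec, hrm, key]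
  · rw [hprec, hsucc, hsucc, hprec, hlr]
  · rw [hsucc, hsucc, hsucc, key, hlm]
  · rw [hprec, hvee, hvee, key, hsucc, hvee, hvee, key]
    have h := hH (T u) (T v) (T w)
    rw [← sub_eq_zero]
    rw [← neg_eq_zero] at h
    rw [← h]
    abel
end

section
/- Let A be an associative algebra over a field K of characteristic 0 and N : A → A a Nijenhuis operator. Then the bilinear operations a ≺ b = aN(b), a ≻ b = N(a)b, and a ⋎ b = −N(ab) make A an NS-algebra; that is, writing a * b = a≺b + a≻b + a⋎b, for all a,b,c ∈ A: (a≺b)≺c = a≺(b*c); (a≻b)≺c = a≻(b≺c); (a*b)≻c = a≻(b≻c); and (a⋎b)≺c + (a*b)⋎c = a≻(b⋎c) + a⋎(b*c). -/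
/-- A Nijenhuis operator N on an associative algebra A induces an NS-algebra
structure on A by a ≺ b = aN(b), a ≻ b = N(a)b, a ⋎ b = -N(ab). -/
theorem stmt_10
    (K : Type*) [Field K] [CharZero K]
    (A : Type*) [AddCommGroup A] [Module K A]
    (mul : A →ₗ[K] A →ₗ[K] A)
    (hmul : ∀ a b c : A, mul (mul a b) c = mul a (mul b c))
    (N : A →ₗ[K] A)
    (hN : ∀ a b : A,
      mul (N a) (N b) = N (mul a (N b) + mul (N a) b - N (mul a b)))
    (prec succ vee star : A → A → A)
    (hprec : ∀ a b : A, prec a b = mul a (N b))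
    (hsucc : ∀ a b : A, succ a b = mul (N a) b)
    (hvee : ∀ a b : A, vee a b = -N (mul a b))
    (hstar : ∀ a b : A, star a b = prec a b + succ a b + vee a b) :
    ∀ a b c : A,
      prec (prec a b) c = prec a (star b c)
      ∧ prec (succ a b) c = succ a (prec b c)
      ∧ succ (star a b) c = succ a (succ b c)
      ∧ prec (vee a b) c + vee (star a b) c
          = succ a (vee b c) + vee a (star b c) := by
  have key : ∀ x y : A, N (mul x (N y) + mul (N x) y + -N (mul x y))
      = mul (N x) (N y) := by
    intro x y
    rw [← sub_eq_add_neg, ← hN]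
  intro a b c
  refine ⟨?_, ?_, ?_, ?_⟩
  · simp only [hprec, hstar, hsucc, hvee, key, hmul]
  · simp only [hprec, hsucc, hmul]
  · simp only [hsucc, hstar, hprec, hvee, key, hmul]
  · simp only [hprec, hsucc, hvee, hstar, hN, map_add, map_sub, map_neg,
      LinearMap.add_apply, LinearMap.sub_apply, LinearMap.neg_apply, hmul]
    abel
end

section
/- Let A be an associative algebra over a field K of characteristic 0 and N : A → A a Nijenhuis operator, and let A_N denote the associative algebra on the vector space A with product a ·_N b = aN(b) + N(a)b − N(ab). Then: (i) the actions a · b = N(a)b and b · a = bN(a) (for a ∈ A_N, b ∈ A) make the vector space A an A_N-bimodule; (ii) the bilinear map H : A_N × A_N → A, H(a,b) = −N(ab), is a Hochschild 2-cocycle of A_N with coefficients in this bimodule; (iii) the identity map id : A → A_N is an H-twisted Rota-Baxter operator, i.e., id(u) ·_N id(v) = id(u·id(v) + id(u)·v + H(u,v)) for all u,v. -/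
/-- For a Nijenhuis operator N on A: (i) the actions a·b = N(a)b, b·a = bN(a)
make A an A_N-bimodule; (ii) H(a,b) = -N(ab) is a Hochschild 2-cocycle of A_N
with coefficients in this bimodule; (iii) the identity map id : A → A_N is an
H-twisted Rota-Baxter operator. -/
theorem stmt_11
    (K : Type*) [Field K] [CharZero K]
    (A : Type*) [AddCommGroup A] [Module K A]
    (mul : A →ₗ[K] A →ₗ[K] A)
    (hmul : ∀ a b c : A, mul (mul a b) c = mul a (mul b c))
    (N : A →ₗ[K] A)
    (hN : ∀ a b : A,
      mul (N a) (N b) = N (mul a (N b) + mul (N a) b - N (mul a b)))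
    (mulN : A → A → A)
    (hmulN : ∀ a b : A, mulN a b = mul a (N b) + mul (N a) b - N (mul a b))
    (lN : A → A → A) (rN : A → A → A)
    (hlN : ∀ a b : A, lN a b = mul (N a) b)
    (hrN : ∀ b a : A, rN b a = mul b (N a))
    (Hn : A → A → A)
    (hHn : ∀ a b : A, Hn a b = -N (mul a b)) :
    -- (i) A is an A_N-bimodule
    ((∀ a b u : A, lN (mulN a b) u = lN a (lN b u))
        ∧ (∀ a u b : A, rN (lN a u) b = lN a (rN u b))
        ∧ (∀ u a b : A, rN (rN u a) b = rN u (mulN a b)))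
      -- (ii) H(a,b) = -N(ab) is a Hochschild 2-cocycle of A_N in this bimodule
      ∧ (∀ a b c : A,
          lN a (Hn b c) - Hn (mulN a b) c + Hn a (mulN b c) - rN (Hn a b) c = 0)
      -- (iii) the identity map is an H-twisted Rota-Baxter operator
      ∧ (∀ u v : A, mulN u v = rN u v + lN u v + Hn u v) := by
  have key : ∀ a b : A, mul (N a) (N b) = N (mulN a b) := by
    intro a b; rw [hmulN]; exact hN a b
  refine ⟨⟨?_, ?_, ?_⟩, ?_, ?_⟩
  · intro a b u
    simp only [hlN, ← key, hmul]
  · intro a u b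
    simp only [hlN, hrN, hmul]
  · intro u a b
    simp only [hrN, ← key, hmul]
  · intro a b c
    simp only [hlN, hrN, hHn, hmulN, map_add, map_sub, map_neg, LinearMap.add_apply,
      LinearMap.sub_apply, LinearMap.neg_apply, LinearMap.map_add, LinearMap.map_sub,
      LinearMap.map_neg, hN, hmul]
    abel
  · intro u v
    rw [hmulN, hrN, hlN, hHn]; abel
end

section
/- Let K be a field of characteristic 0, A an associative algebra over K, M an A-bimodule, H a Hochschild 2-cocycle, and T : M → A an H-twisted Rota-Baxter operator. Define on M the associative product u * v = u·T(v) + T(u)·v + H(Tu,Tv), and define l_T : M × A → A and r_T : A × M → A by l_T(u,a) = T(u)a − T(u·a) − T(H(Tu,a)) and r_T(a,u) = aT(u) − T(a·u) − T(H(a,Tu)). Then (l_T, r_T) is an (M,*)-bimodule structure on A; i.e., for all u,v ∈ M and a ∈ A: l_T(u*v, a) = l_T(u, l_T(v,a)); r_T(l_T(u,a), v) = l_T(u, r_T(a,v)); and r_T(r_T(a,u), v) = r_T(a, u*v). -/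
/-- For an H-twisted Rota-Baxter operator T : M → A, the maps
l_T(u,a) = T(u)a - T(u·a) - T(H(Tu,a)) and r_T(a,u) = aT(u) - T(a·u) - T(H(a,Tu))
define an (M,*)-bimodule structure on A. -/
theorem stmt_14
    (K : Type*) [Field K] [CharZero K]
    (A : Type*) [AddCommGroup A] [Module K A]
    (M : Type*) [AddCommGroup M] [Module K M]
    (mul : A →ₗ[K] A →ₗ[K] A)
    (hmul : ∀ a b c : A, mul (mul a b) c = mul a (mul b c))
    (l : A →ₗ[K] M →ₗ[K] M) (r : M →ₗ[K] A →ₗ[K] M)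
    (hlm : ∀ (a b : A) (u : M), l (mul a b) u = l a (l b u))
    (hlr : ∀ (a : A) (u : M) (b : A), r (l a u) b = l a (r u b))
    (hrm : ∀ (u : M) (a b : A), r (r u a) b = r u (mul a b))
    (H : A →ₗ[K] A →ₗ[K] M)
    (hH : ∀ a b c : A, l a (H b c) - H (mul a b) c + H a (mul b c) - r (H a b) c = 0)
    (T : M →ₗ[K] A)
    (hT : ∀ u v : M,
      mul (T u) (T v) = T (r u (T v) + l (T u) v + H (T u) (T v)))
    (star : M → M → M)
    (hstar : ∀ u v : M, star u v = r u (T v) + l (T u) v + H (T u) (T v))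
    (lT : M → A → A) (rT : A → M → A)
    (hlT : ∀ (u : M) (a : A), lT u a = mul (T u) a - T (r u a) - T (H (T u) a))
    (hrT : ∀ (a : A) (u : M), rT a u = mul a (T u) - T (l a u) - T (H a (T u))) :
    (∀ (u v : M) (a : A), lT (star u v) a = lT u (lT v a))
      ∧ (∀ (u : M) (a : A) (v : M), rT (lT u a) v = lT u (rT a v))
      ∧ (∀ (a : A) (u v : M), rT (rT a u) v = rT a (star u v)) := by
  have key : ∀ u v : M, T (star u v) = mul (T u) (T v) := fun u v => by
    rw [hstar, ← hT]
  have hH' : ∀ a b c : A, H (mul a b) c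
      = l a (H b c) + H a (mul b c) - r (H a b) c := fun a b c => by
    linear_combination (norm := abel) - hH a b c
  have hH'' : ∀ a b c : A, H a (mul b c)
      = H (mul a b) c + r (H a b) c - l a (H b c) := fun a b c => by
    linear_combination (norm := abel) hH a b c
  refine ⟨fun u v a => ?_, fun u a v => ?_, fun a u v => ?_⟩
  · simp only [hlT]
    rw [key, hmul, hH' (T u) (T v) a]
    simp only [hstar, map_add, map_sub, LinearMap.add_apply, LinearMap.sub_apply,
      hT, hlm, hlr, hrm]
    abel
  · simp only [hlT, hrT, map_add, map_sub, LinearMap.add_apply, LinearMap.sub_apply,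
      hT, hmul, hH', hlm, hlr, hrm]
    abel
  · simp only [hlT, hrT]
    rw [key, ← hmul a (T u) (T v), hH'' a (T u) (T v)]
    simp only [hstar, map_add, map_sub, LinearMap.add_apply, LinearMap.sub_apply,
      hT, hlm, hlr]
    abel
end

section
/- Let K be a field of characteristic 0, A an associative algebra over K, M an A-bimodule, H a Hochschild 2-cocycle, and T : M → A an H-twisted Rota-Baxter operator. For n ≥ 0 define δ : Hom(M^{⊗n}, A) → Hom(M^{⊗n+1}, A) on multilinear maps f : M^n → A by (δf)(u₁,…,u_{n+1}) = T(u₁)f(u₂,…,u_{n+1}) − T(u₁·f(u₂,…,u_{n+1})) − T(H(Tu₁, f(u₂,…,u_{n+1}))) + Σ_{i=1}^{n} (−1)^i f(u₁,…,u_{i−1}, u_i·T(u_{i+1}) + T(u_i)·u_{i+1} + H(Tu_i, Tu_{i+1}), u_{i+2},…,u_{n+1}) + (−1)^{n+1}[f(u₁,…,u_n)T(u_{n+1}) − T(f(u₁,…,u_n)·u_{n+1}) − T(H(f(u₁,…,u_n), Tu_{n+1}))]. Then δ∘δ = 0; i.e., for every multilinear f : M^n → A, δ(δf) = 0. -/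
/-- The product u * v = u·T(v) + T(u)·v + H(Tu,Tv) on M. -/
def twStar {K A M : Type*} [Field K] [AddCommGroup A] [Module K A]
    [AddCommGroup M] [Module K M]
    (l : A →ₗ[K] M →ₗ[K] M) (r : M →ₗ[K] A →ₗ[K] M)
    (H : A →ₗ[K] A →ₗ[K] M) (T : M →ₗ[K] A) (u v : M) : M :=
  r u (T v) + l (T u) v + H (T u) (T v)

/-- The coboundary operator δ of an H-twisted Rota-Baxter operator T
(the Hochschild coboundary of (M,*) with coefficients in the
M-bimodule A given by l_T, r_T). -/
def twCoboundary {K A M : Type*} [Field K] [AddCommGroup A] [Module K A]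
    [AddCommGroup M] [Module K M]
    (mul : A →ₗ[K] A →ₗ[K] A)
    (l : A →ₗ[K] M →ₗ[K] M) (r : M →ₗ[K] A →ₗ[K] M)
    (H : A →ₗ[K] A →ₗ[K] M) (T : M →ₗ[K] A)
    (n : ℕ) (f : (Fin n → M) → A) : (Fin (n + 1) → M) → A :=
  fun u =>
    (mul (T (u 0)) (f (fun i => u i.succ))
        - T (r (u 0) (f (fun i => u i.succ)))
        - T (H (T (u 0)) (f (fun i => u i.succ))))
    + ∑ i : Fin n, ((-1 : ℤ) ^ (i.val + 1)) •
        f (fun j =>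
          if j.val < i.val then u (Fin.castSucc j)
          else if j.val = i.val then
            twStar l r H T (u (Fin.castSucc i)) (u i.succ)
          else u j.succ)
    + ((-1 : ℤ) ^ (n + 1)) •
        (mul (f (fun i => u (Fin.castSucc i))) (T (u (Fin.last n)))
          - T (l (f (fun i => u (Fin.castSucc i))) (u (Fin.last n)))
          - T (H (f (fun i => u (Fin.castSucc i))) (T (u (Fin.last n)))))


set_option linter.unusedSectionVars false
set_option linter.unreachableTactic false
set_option linter.unusedTactic false
set_option linter.unnecessarySeqFocus false
set_option maxHeartbeats 1000000

section Generic
variable {K A M : Type*} [Field K] [AddCommGroup A] [Module K A] [AddCommGroup M] [Module K M]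

def mg (star : M → M → M) {m : ℕ} (u : Fin (m+1) → M) (i : Fin m) : Fin m → M :=
  fun j => if j.val < i.val then u (Fin.castSucc j)
    else if j.val = i.val then star (u (Fin.castSucc i)) (u i.succ)
    else u j.succ

def genD (star : M → M → M) (L : M → A →ₗ[K] A) (R : A →ₗ[K] M →ₗ[K] A)
    (n : ℕ) (f : (Fin n → M) → A) : (Fin (n+1) → M) → A :=
  fun u => L (u 0) (f (fun i => u i.succ))
    + ∑ i : Fin n, ((-1:ℤ)^(i.val+1)) • f (mg star u i)
    + ((-1:ℤ)^(n+1)) • R (f (fun i => u (Fin.castSucc i))) (u (Fin.last n))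


variable (star : M → M → M)

lemma mg_lt {m : ℕ} (u : Fin (m+1) → M) (i k : Fin m) (h : k.val < i.val) :
    mg star u i k = u (Fin.castSucc k) := by
  simp only [mg]; rw [if_pos h]

lemma mg_eq {m : ℕ} (u : Fin (m+1) → M) (i k : Fin m) (h : k.val = i.val) :
    mg star u i k = star (u (Fin.castSucc i)) (u i.succ) := by
  simp only [mg]; rw [if_neg (by omega), if_pos h]

lemma mg_gt {m : ℕ} (u : Fin (m+1) → M) (i k : Fin m) (h : i.val < k.val) :
    mg star u i k = u k.succ := by
  simp only [mg]; rw [if_neg (by omega), if_neg (by omega)]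

lemma mg_mg (hA1 : ∀ a b c, star (star a b) c = star a (star b c))
    (n : ℕ) (u : Fin (n+2) → M) (i : Fin (n+1)) (j : Fin n) (h : i.val ≤ j.val) :
    mg star (mg star u i) j
      = mg star (mg star u j.succ) ⟨i.val, lt_of_le_of_lt h j.isLt⟩ := by
  have uic : ∀ a b : Fin (n+2), a.val = b.val → u a = u b :=
    fun a b hab => congrArg u (Fin.ext hab)
  funext k
  have hk := k.isLt
  have hj := j.isLt
  rcases Nat.lt_trichotomy k.val i.val with hki | hki | hki
  · rw [mg_lt star _ j k (by omega), mg_lt star _ i k.castSucc (by simpa using hki),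
      mg_lt star _ _ k (by simpa using hki),
      mg_lt star _ _ k.castSucc (by simp only [Fin.coe_castSucc, Fin.val_succ] <;> omega)]
  · rcases Nat.lt_trichotomy k.val j.val with hkj | hkj | hkj
    · rw [mg_lt star _ j k hkj, mg_eq star _ i k.castSucc (by simpa using hki),
        mg_eq star _ _ k (by simpa using hki),
        mg_lt star _ _ (Fin.castSucc ⟨i.val, _⟩) (by simp only [Fin.coe_castSucc, Fin.val_succ] <;> omega),
        mg_lt star _ _ (Fin.succ ⟨i.val, _⟩) (by simp only [Fin.coe_castSucc, Fin.val_succ] <;> omega)]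
      exact congrArg₂ star (uic _ _ (by simp only [Fin.coe_castSucc, Fin.val_succ] <;> omega))
        (uic _ _ (by simp only [Fin.coe_castSucc, Fin.val_succ] <;> omega))
    · rw [mg_eq star _ j k hkj, mg_eq star _ i j.castSucc (by simp only [Fin.coe_castSucc, Fin.val_succ] <;> omega),
        mg_gt star _ i j.succ (by simp only [Fin.coe_castSucc, Fin.val_succ] <;> omega),
        mg_eq star _ _ k (by simpa using hki),
        mg_lt star _ _ (Fin.castSucc ⟨i.val, _⟩) (by simp only [Fin.coe_castSucc, Fin.val_succ] <;> omega),
        mg_eq star _ _ (Fin.succ ⟨i.val, _⟩) (by simp only [Fin.coe_castSucc, Fin.val_succ] <;> omega)]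
      rw [hA1]
      exact congrArg₂ star (uic _ _ (by simp only [Fin.coe_castSucc, Fin.val_succ] <;> omega))
        (congrArg₂ star (uic _ _ (by simp only [Fin.coe_castSucc, Fin.val_succ] <;> omega))
          (uic _ _ (by simp only [Fin.coe_castSucc, Fin.val_succ] <;> omega)))
    · omega
  · rcases Nat.lt_trichotomy k.val j.val with hkj | hkj | hkj
    · rw [mg_lt star _ j k hkj, mg_gt star _ i k.castSucc (by simpa using hki),
        mg_gt star _ _ k (by simpa using hki),
        mg_lt star _ _ k.succ (by simp only [Fin.coe_castSucc, Fin.val_succ] <;> omega)]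
      exact uic _ _ (by simp only [Fin.coe_castSucc, Fin.val_succ] <;> omega)
    · rw [mg_eq star _ j k hkj, mg_gt star _ i j.castSucc (by simp only [Fin.coe_castSucc, Fin.val_succ] <;> omega),
        mg_gt star _ i j.succ (by simp only [Fin.coe_castSucc, Fin.val_succ] <;> omega),
        mg_gt star _ _ k (by simpa using hki),
        mg_eq star _ _ k.succ (by simp only [Fin.coe_castSucc, Fin.val_succ] <;> omega)]
      exact congrArg₂ star (uic _ _ (by simp only [Fin.coe_castSucc, Fin.val_succ] <;> omega))
        (uic _ _ (by simp only [Fin.coe_castSucc, Fin.val_succ] <;> omega))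
    · rw [mg_gt star _ j k hkj, mg_gt star _ i k.succ (by simp only [Fin.coe_castSucc, Fin.val_succ] <;> omega),
        mg_gt star _ _ k (by simpa using hki),
        mg_gt star _ _ k.succ (by simp only [Fin.coe_castSucc, Fin.val_succ] <;> omega)]

lemma mg_mg' (hA1 : ∀ a b c, star (star a b) c = star a (star b c))
    (n : ℕ) (u : Fin (n+2) → M) (i : Fin (n+1)) (j : Fin n) (h : j.val < i.val) :
    mg star (mg star u i) j
      = mg star (mg star u ⟨j.val, lt_trans j.isLt (Nat.lt_succ_self n)⟩)
          ⟨i.val - 1, by have := i.isLt; omega⟩ := by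
  have key := mg_mg star hA1 n u ⟨j.val, lt_trans j.isLt (Nat.lt_succ_self n)⟩
    ⟨i.val - 1, by have := i.isLt; omega⟩ (by show j.val ≤ i.val - 1; omega)
  have e1 : (Fin.succ (⟨i.val - 1, by have := i.isLt; omega⟩ : Fin n) : Fin (n+1)) = i :=
    Fin.ext (by simp only [Fin.val_succ]; omega)
  refine Eq.trans ?_ key.symm
  exact congrArg₂ (fun (X : Fin (n+1)) (Y : Fin n) => mg star (mg star u X) Y)
    e1.symm (Fin.ext rfl)

lemma mg_zero_head (n : ℕ) (u : Fin (n+2) → M) :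
    mg star u (0 : Fin (n+1)) 0 = star (u 0) (u ((0 : Fin (n+1)).succ)) := by
  simp [mg]

lemma mg_zero_tail (n : ℕ) (u : Fin (n+2) → M) :
    (fun j : Fin n => mg star u (0:Fin (n+1)) j.succ) = fun j : Fin n => u j.succ.succ := by
  funext j
  simp [mg]

lemma mg_succ_head (n : ℕ) (u : Fin (n+2) → M) (i : Fin n) : mg star u i.succ 0 = u 0 := by
  simp [mg]

lemma mg_succ_tail (n : ℕ) (u : Fin (n+2) → M) (i : Fin n) :
    (fun j : Fin n => mg star u i.succ j.succ) = mg star (fun k : Fin (n+1) => u k.succ) i := by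
  funext j
  simp only [mg, Fin.val_succ, Fin.coe_castSucc, add_lt_add_iff_right, add_left_inj,
    Fin.succ_castSucc]

lemma mg_cast_last (n : ℕ) (u : Fin (n+2) → M) (i : Fin n) :
    mg star u (Fin.castSucc i) (Fin.last n) = u (Fin.last (n+1)) := by
  have h := i.isLt
  simp only [mg, Fin.val_last, Fin.coe_castSucc, Fin.succ_last]
  rw [if_neg (by omega), if_neg (by omega)]

lemma mg_cast_init (n : ℕ) (u : Fin (n+2) → M) (i : Fin n) :
    (fun k : Fin n => mg star u (Fin.castSucc i) (Fin.castSucc k))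
      = mg star (fun k : Fin (n+1) => u (Fin.castSucc k)) i := by
  funext k
  simp only [mg, Fin.coe_castSucc, Fin.succ_castSucc]

lemma mg_last_last (n : ℕ) (u : Fin (n+2) → M) :
    mg star u (Fin.last n) (Fin.last n)
      = star (u (Fin.castSucc (Fin.last n))) (u (Fin.last (n+1))) := by
  simp only [mg, Fin.val_last, lt_self_iff_false, if_false, if_pos rfl, Fin.succ_last]
  simp

lemma mg_last_init (n : ℕ) (u : Fin (n+2) → M) :
    (fun k : Fin n => mg star u (Fin.last n) (Fin.castSucc k))
      = fun k : Fin n => u (Fin.castSucc (Fin.castSucc k)) := by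
  funext k
  have h := k.isLt
  simp only [mg, Fin.coe_castSucc, Fin.val_last]
  rw [if_pos (by omega)]

theorem genD_sq (L : M → A →ₗ[K] A) (R : A →ₗ[K] M →ₗ[K] A)
    (hA1 : ∀ a b c, star (star a b) c = star a (star b c))
    (hA2 : ∀ v w a, L (star v w) a = L v (L w a))
    (hA3 : ∀ (v : M) (a : A) (w : M), R (L v a) w = L v (R a w))
    (hA4 : ∀ (a : A) (v w : M), R (R a v) w = R a (star v w))
    (n : ℕ) (f : (Fin n → M) → A) (u : Fin (n+2) → M) :
    genD star L R (n+1) (genD star L R n f) u = 0 := by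
  have top : genD star L R (n+1) (genD star L R n f) u =
      L (u 0) (genD star L R n f (fun i => u i.succ))
      + (∑ i : Fin (n+1), ((-1:ℤ)^(i.val+1)) • genD star L R n f (mg star u i))
      + ((-1:ℤ)^(n+1+1)) • R (genD star L R n f (fun i => u (Fin.castSucc i)))
          (u (Fin.last (n+1))) := rfl
  have E1 : L (u 0) (genD star L R n f (fun i => u i.succ)) =
      L (u 0) (L (u ((0:Fin (n+1)).succ)) (f (fun i : Fin n => u i.succ.succ)))
      + (∑ j : Fin n, ((-1:ℤ)^(j.val+1)) •
          L (u 0) (f (mg star (fun k : Fin (n+1) => u k.succ) j)))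
      + ((-1:ℤ)^(n+1)) •
          L (u 0) (R (f (fun i : Fin n => u (Fin.castSucc i).succ)) (u (Fin.last n).succ)) := by
    simp only [genD, map_add, map_sum, map_zsmul]
  have E2 : (∑ i : Fin (n+1), ((-1:ℤ)^(i.val+1)) • genD star L R n f (mg star u i)) =
      (∑ i : Fin (n+1), ((-1:ℤ)^(i.val+1)) •
          L (mg star u i 0) (f (fun k : Fin n => mg star u i k.succ)))
      + (∑ i : Fin (n+1), ∑ j : Fin n, (((-1:ℤ)^(i.val+1)) * ((-1:ℤ)^(j.val+1))) •
          f (mg star (mg star u i) j))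
      + (∑ i : Fin (n+1), (((-1:ℤ)^(i.val+1)) * ((-1:ℤ)^(n+1))) •
          R (f (fun k : Fin n => mg star u i (Fin.castSucc k))) (mg star u i (Fin.last n))) := by
    rw [← Finset.sum_add_distrib, ← Finset.sum_add_distrib]
    refine Finset.sum_congr rfl (fun i _ => ?_)
    simp only [genD, smul_add, Finset.smul_sum, smul_smul]
  have E3 : ((-1:ℤ)^(n+1+1)) • R (genD star L R n f (fun i => u (Fin.castSucc i)))
        (u (Fin.last (n+1))) =
      ((-1:ℤ)^(n+1+1)) • R (L (u (Fin.castSucc (0:Fin (n+1))))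
          (f (fun i : Fin n => u (Fin.castSucc i.succ)))) (u (Fin.last (n+1)))
      + (∑ j : Fin n, (((-1:ℤ)^(n+1+1)) * ((-1:ℤ)^(j.val+1))) •
          R (f (mg star (fun k : Fin (n+1) => u (Fin.castSucc k)) j)) (u (Fin.last (n+1))))
      + (((-1:ℤ)^(n+1+1)) * ((-1:ℤ)^(n+1))) •
          R (R (f (fun i : Fin n => u (Fin.castSucc (Fin.castSucc i))))
            (u (Fin.castSucc (Fin.last n)))) (u (Fin.last (n+1))) := by
    simp only [genD, map_add, map_sum, map_zsmul, LinearMap.add_apply, LinearMap.sum_apply,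
      LinearMap.smul_apply, smul_add, Finset.smul_sum, smul_smul]
  rw [top, E1, E2, E3]
  rw [Fin.sum_univ_succ (f := fun i : Fin (n+1) => ((-1:ℤ)^(i.val+1)) •
    L (mg star u i 0) (f (fun k : Fin n => mg star u i k.succ)))]
  rw [Fin.sum_univ_castSucc (f := fun i : Fin (n+1) => (((-1:ℤ)^(i.val+1)) * ((-1:ℤ)^(n+1))) •
    R (f (fun k : Fin n => mg star u i (Fin.castSucc k))) (mg star u i (Fin.last n)))]
  have z1 : ((-1:ℤ)^((0:Fin (n+1)).val+1)) •
        L (mg star u 0 0) (f (fun k : Fin n => mg star u 0 k.succ))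
      = -(L (u 0) (L (u ((0:Fin (n+1)).succ)) (f (fun i : Fin n => u i.succ.succ)))) := by
    rw [mg_zero_head star n u, mg_zero_tail star n u, hA2]
    norm_num
  have z2 : ∀ j : Fin n, ((-1:ℤ)^((j.succ:Fin (n+1)).val+1)) •
        L (mg star u j.succ 0) (f (fun k : Fin n => mg star u j.succ k.succ))
      = -(((-1:ℤ)^(j.val+1)) • L (u 0) (f (mg star (fun k : Fin (n+1) => u k.succ) j))) := by
    intro j
    rw [mg_succ_head star n u j, mg_succ_tail star n u j, Fin.val_succ, pow_succ]
    rw [mul_comm, neg_one_mul, neg_smul]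
  have zS2 : (∑ j : Fin n, ((-1:ℤ)^((j.succ:Fin (n+1)).val+1)) •
        L (mg star u j.succ 0) (f (fun k : Fin n => mg star u j.succ k.succ)))
      = -(∑ j : Fin n, ((-1:ℤ)^(j.val+1)) •
          L (u 0) (f (mg star (fun k : Fin (n+1) => u k.succ) j))) := by
    rw [← Finset.sum_neg_distrib]
    exact Finset.sum_congr rfl (fun j _ => z2 j)
  have z3 : ((-1:ℤ)^(n+1+1)) • R (L (u (Fin.castSucc (0:Fin (n+1))))
        (f (fun i : Fin n => u (Fin.castSucc i.succ)))) (u (Fin.last (n+1)))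
      = -(((-1:ℤ)^(n+1)) •
          L (u 0) (R (f (fun i : Fin n => u (Fin.castSucc i).succ)) (u (Fin.last n).succ))) := by
    rw [hA3, Fin.castSucc_zero, ← Fin.succ_last,
      show (fun i : Fin n => u (Fin.castSucc i.succ)) = fun i : Fin n => u (Fin.castSucc i).succ
        from funext fun i => congrArg u (Fin.succ_castSucc i).symm,
      pow_succ, mul_comm, neg_one_mul, neg_smul]
  have z4 : (∑ i : Fin (n+1), ∑ j : Fin n, (((-1:ℤ)^(i.val+1)) * ((-1:ℤ)^(j.val+1))) •
        f (mg star (mg star u i) j)) = 0 := by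
    rw [← Finset.sum_product']
    refine Finset.sum_ninvolution
      (fun p => if h : p.1.val ≤ p.2.val
        then (p.2.succ, ⟨p.1.val, lt_of_le_of_lt h p.2.isLt⟩)
        else (⟨p.2.val, lt_trans p.2.isLt (Nat.lt_succ_self n)⟩,
          ⟨p.1.val - 1, by have := p.1.isLt; omega⟩))
      ?_ ?_ (fun _ => Finset.mem_univ _) ?_
    · rintro ⟨i, j⟩
      dsimp only
      by_cases h : i.val ≤ j.val
      · rw [dif_pos h]
        dsimp only
        rw [mg_mg star hA1 n u i j h, ← add_smul]
        rw [show ((-1:ℤ)^(i.val+1) * (-1:ℤ)^(j.val+1)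
            + (-1:ℤ)^((j.succ:Fin (n+1)).val+1) * (-1:ℤ)^((⟨i.val, lt_of_le_of_lt h j.isLt⟩ : Fin n).val+1)) = 0 from by
          simp only [Fin.val_succ]
          rw [pow_succ ((-1:ℤ)) (j.val+1)]
          ring, zero_smul]
      · rw [dif_neg h]
        dsimp only
        rw [mg_mg' star hA1 n u i j (Nat.lt_of_not_le h), ← add_smul]
        rw [show ((-1:ℤ)^(i.val+1) * (-1:ℤ)^(j.val+1)
            + (-1:ℤ)^((⟨j.val, lt_trans j.isLt (Nat.lt_succ_self n)⟩ : Fin (n+1)).val+1)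
              * (-1:ℤ)^((⟨i.val - 1, by have := i.isLt; omega⟩ : Fin n).val+1)) = 0 from by
          have hi : i.val - 1 + 1 = i.val := by
            have := Nat.lt_of_not_le h; omega
          show ((-1:ℤ)^(i.val+1) * (-1:ℤ)^(j.val+1)
            + (-1:ℤ)^(j.val+1) * (-1:ℤ)^(i.val - 1+1)) = 0
          rw [hi, pow_succ ((-1:ℤ)) i.val]
          ring, zero_smul]
    · rintro ⟨i, j⟩ -
      dsimp only
      by_cases h : i.val ≤ j.val
      · rw [dif_pos h]
        intro hc
        rw [Prod.ext_iff] at hc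
        have := congrArg Fin.val hc.1
        simp only [Fin.val_succ] at this
        omega
      · rw [dif_neg h]
        intro hc
        rw [Prod.ext_iff] at hc
        have := congrArg Fin.val hc.1
        simp only at this
        omega
    · rintro ⟨i, j⟩
      dsimp only
      by_cases h : i.val ≤ j.val
      · rw [dif_pos h, dif_neg (by simp only [Fin.val_succ]; omega)]
        refine Prod.ext (Fin.ext ?_) (Fin.ext ?_) <;> simp [Fin.val_succ]
      · rw [dif_neg h, dif_pos (by simp only; have := Nat.lt_of_not_le h; omega)]
        have := Nat.lt_of_not_le h
        refine Prod.ext (Fin.ext ?_) (Fin.ext ?_) <;> simp [Fin.val_succ] <;> omega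
  have z5 : ∀ i : Fin n, (((-1:ℤ)^(n+1+1)) * ((-1:ℤ)^(i.val+1))) •
        R (f (mg star (fun k : Fin (n+1) => u (Fin.castSucc k)) i)) (u (Fin.last (n+1)))
      = -((((-1:ℤ)^((i.castSucc : Fin (n+1)).val+1)) * ((-1:ℤ)^(n+1))) •
          R (f (fun k : Fin n => mg star u i.castSucc (Fin.castSucc k)))
            (mg star u i.castSucc (Fin.last n))) := by
    intro i
    rw [mg_cast_last star n u i, mg_cast_init star n u i, ← neg_smul]
    congr 1
    simp only [Fin.coe_castSucc]
    rw [pow_succ ((-1:ℤ)) (n+1)]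
    ring
  have zS8 : (∑ j : Fin n, (((-1:ℤ)^(n+1+1)) * ((-1:ℤ)^(j.val+1))) •
        R (f (mg star (fun k : Fin (n+1) => u (Fin.castSucc k)) j)) (u (Fin.last (n+1))))
      = -(∑ i : Fin n, (((-1:ℤ)^((i.castSucc : Fin (n+1)).val+1)) * ((-1:ℤ)^(n+1))) •
          R (f (fun k : Fin n => mg star u i.castSucc (Fin.castSucc k)))
            (mg star u i.castSucc (Fin.last n))) := by
    rw [← Finset.sum_neg_distrib]
    exact Finset.sum_congr rfl (fun j _ => z5 j)
  have z6 : (((-1:ℤ)^(n+1+1)) * ((-1:ℤ)^(n+1))) •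
        R (R (f (fun i : Fin n => u (Fin.castSucc (Fin.castSucc i))))
          (u (Fin.castSucc (Fin.last n)))) (u (Fin.last (n+1)))
      = -((((-1:ℤ)^((Fin.last n : Fin (n+1)).val+1)) * ((-1:ℤ)^(n+1))) •
          R (f (fun k : Fin n => mg star u (Fin.last n) (Fin.castSucc k)))
            (mg star u (Fin.last n) (Fin.last n))) := by
    rw [mg_last_last star n u, mg_last_init star n u, hA4, ← neg_smul]
    congr 1
    simp only [Fin.val_last]
    rw [pow_succ ((-1:ℤ)) (n+1)]
    ring
  rw [z1, zS2, z3, z4, zS8, z6]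
  abel

end Generic

section Inst
variable {K A M : Type*} [Field K] [AddCommGroup A] [Module K A] [AddCommGroup M] [Module K M]

def lTmap (mul : A →ₗ[K] A →ₗ[K] A) (r : M →ₗ[K] A →ₗ[K] M)
    (H : A →ₗ[K] A →ₗ[K] M) (T : M →ₗ[K] A) : M → A →ₗ[K] A :=
  fun v => mul (T v) - T ∘ₗ r v - T ∘ₗ H (T v)

def rTmap (mul : A →ₗ[K] A →ₗ[K] A) (l : A →ₗ[K] M →ₗ[K] M)
    (H : A →ₗ[K] A →ₗ[K] M) (T : M →ₗ[K] A) : A →ₗ[K] M →ₗ[K] A :=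
  LinearMap.mk₂ K (fun a v => mul a (T v) - T (l a v) - T (H a (T v)))
    (fun a a' v => by simp only [map_add, LinearMap.add_apply]; abel)
    (fun c a v => by simp only [map_smul, LinearMap.smul_apply, smul_sub])
    (fun a v v' => by simp only [map_add, LinearMap.add_apply]; abel)
    (fun c a v => by simp only [map_smul, LinearMap.smul_apply, smul_sub])


lemma tw_eq_genD (mul : A →ₗ[K] A →ₗ[K] A)
    (l : A →ₗ[K] M →ₗ[K] M) (r : M →ₗ[K] A →ₗ[K] M)
    (H : A →ₗ[K] A →ₗ[K] M) (T : M →ₗ[K] A)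
    (n : ℕ) (f : (Fin n → M) → A) :
    twCoboundary mul l r H T n f
      = genD (twStar l r H T) (lTmap mul r H T) (rTmap mul l H T) n f := by
  funext u
  simp only [twCoboundary, genD, mg, lTmap, rTmap, LinearMap.sub_apply, LinearMap.coe_comp,
    Function.comp_apply, LinearMap.mk₂_apply]
  rfl

end Inst

/-- δ ∘ δ = 0 for the coboundary of an H-twisted Rota-Baxter operator. -/
theorem stmt_15
    (K : Type*) [Field K] [CharZero K]
    (A : Type*) [AddCommGroup A] [Module K A]
    (M : Type*) [AddCommGroup M] [Module K M]
    (mul : A →ₗ[K] A →ₗ[K] A)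
    (hmul : ∀ a b c : A, mul (mul a b) c = mul a (mul b c))
    (l : A →ₗ[K] M →ₗ[K] M) (r : M →ₗ[K] A →ₗ[K] M)
    (hlm : ∀ (a b : A) (u : M), l (mul a b) u = l a (l b u))
    (hlr : ∀ (a : A) (u : M) (b : A), r (l a u) b = l a (r u b))
    (hrm : ∀ (u : M) (a b : A), r (r u a) b = r u (mul a b))
    (H : A →ₗ[K] A →ₗ[K] M)
    (hH : ∀ a b c : A, l a (H b c) - H (mul a b) c + H a (mul b c) - r (H a b) c = 0)
    (T : M →ₗ[K] A)
    (hT : ∀ u v : M,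
      mul (T u) (T v) = T (r u (T v) + l (T u) v + H (T u) (T v))) :
    ∀ (n : ℕ) (f : MultilinearMap K (fun _ : Fin n => M) A)
      (u : Fin (n + 2) → M),
      twCoboundary mul l r H T (n + 1) (twCoboundary mul l r H T n ⇑f) u = 0 := by
  intro n f u
  have hTT : ∀ x y : M, mul (T x) (T y)
      = T (r x (T y)) + T (l (T x) y) + T (H (T x) (T y)) := by
    intro x y; rw [hT x y, map_add, map_add]
  have hA1 : ∀ a b c : M, twStar l r H T (twStar l r H T a b) c
      = twStar l r H T a (twStar l r H T b c) := by
    intro a b c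
    have e1 : T (r a (T b) + l (T a) b + H (T a) (T b)) = mul (T a) (T b) := (hT a b).symm
    have e2 : T (r b (T c) + l (T b) c + H (T b) (T c)) = mul (T b) (T c) := (hT b c).symm
    simp only [twStar]
    rw [e1, e2]
    have h2 := hH (T a) (T b) (T c)
    simp only [map_add, map_sub, LinearMap.add_apply, LinearMap.sub_apply,
      hmul, hrm, hlm, hlr] at h2 ⊢
    simp only [hTT, map_add, map_sub, LinearMap.add_apply, LinearMap.sub_apply, hmul, hrm, hlm, hlr] at h2 ⊢
    rw [← sub_eq_zero]
    replace h2 := neg_eq_zero.mpr h2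
    rw [← h2]
    abel
  have hA2 : ∀ v w a, lTmap mul r H T (twStar l r H T v w) a
      = lTmap mul r H T v (lTmap mul r H T w a) := by
    intro v w a
    have e1 : T (r v (T w) + l (T v) w + H (T v) (T w)) = mul (T v) (T w) := (hT v w).symm
    simp only [lTmap, LinearMap.sub_apply, LinearMap.coe_comp, Function.comp_apply, twStar]
    rw [e1]
    have h0 := hH (T v) (T w) a
    have h2 : T (l (T v) (H (T w) a)) - T (H (mul (T v) (T w)) a)
        + T (H (T v) (mul (T w) a)) - T (r (H (T v) (T w)) a) = 0 := by
      have : T (l (T v) (H (T w) a) - H (mul (T v) (T w)) a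
          + H (T v) (mul (T w) a) - r (H (T v) (T w)) a) = 0 := by rw [h0, map_zero]
      simpa [map_sub, map_add] using this
    simp only [map_add, map_sub, LinearMap.add_apply, LinearMap.sub_apply,
      hmul, hrm, hlm, hlr] at h2 ⊢
    simp only [hTT, map_add, map_sub, LinearMap.add_apply, LinearMap.sub_apply, hmul, hrm, hlm, hlr] at h2 ⊢
    rw [← sub_eq_zero]
    first
      | (rw [← h2]; abel)
      | (replace h2 : -_ = (0:M) := neg_eq_zero.mpr h2; rw [← h2]; abel)
      | (replace h2 : -_ = (0:A) := neg_eq_zero.mpr h2; rw [← h2]; abel)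
  have hA3 : ∀ (v : M) (a : A) (w : M),
      rTmap mul l H T (lTmap mul r H T v a) w = lTmap mul r H T v (rTmap mul l H T a w) := by
    intro v a w
    simp only [lTmap, rTmap, LinearMap.sub_apply, LinearMap.coe_comp, Function.comp_apply,
      LinearMap.mk₂_apply]
    have h0 := hH (T v) a (T w)
    have h2 : T (l (T v) (H a (T w))) - T (H (mul (T v) a) (T w))
        + T (H (T v) (mul a (T w))) - T (r (H (T v) a) (T w)) = 0 := by
      have : T (l (T v) (H a (T w)) - H (mul (T v) a) (T w)
          + H (T v) (mul a (T w)) - r (H (T v) a) (T w)) = 0 := by rw [h0, map_zero]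
      simpa [map_sub, map_add] using this
    simp only [map_add, map_sub, LinearMap.add_apply, LinearMap.sub_apply,
      hmul, hrm, hlm, hlr] at h2 ⊢
    simp only [hTT, map_add, map_sub, LinearMap.add_apply, LinearMap.sub_apply, hmul, hrm, hlm, hlr] at h2 ⊢
    rw [← sub_eq_zero]
    first
      | (rw [← h2]; abel)
      | (replace h2 : -_ = (0:M) := neg_eq_zero.mpr h2; rw [← h2]; abel)
      | (replace h2 : -_ = (0:A) := neg_eq_zero.mpr h2; rw [← h2]; abel)
  have hA4 : ∀ (a : A) (v w : M),
      rTmap mul l H T (rTmap mul l H T a v) w = rTmap mul l H T a (twStar l r H T v w) := by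
    intro a v w
    have e1 : T (r v (T w) + l (T v) w + H (T v) (T w)) = mul (T v) (T w) := (hT v w).symm
    simp only [rTmap, LinearMap.mk₂_apply, twStar]
    rw [e1]
    have h0 := hH a (T v) (T w)
    have h2 : T (l a (H (T v) (T w))) - T (H (mul a (T v)) (T w))
        + T (H a (mul (T v) (T w))) - T (r (H a (T v)) (T w)) = 0 := by
      have : T (l a (H (T v) (T w)) - H (mul a (T v)) (T w)
          + H a (mul (T v) (T w)) - r (H a (T v)) (T w)) = 0 := by rw [h0, map_zero]
      simpa [map_sub, map_add] using this
    simp only [map_add, map_sub, LinearMap.add_apply, LinearMap.sub_apply,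
      hmul, hrm, hlm, hlr] at h2 ⊢
    simp only [hTT, map_add, map_sub, LinearMap.add_apply, LinearMap.sub_apply, hmul, hrm, hlm, hlr] at h2 ⊢
    rw [← sub_eq_zero]
    first
      | (rw [← h2]; abel)
      | (replace h2 : -_ = (0:M) := neg_eq_zero.mpr h2; rw [← h2]; abel)
      | (replace h2 : -_ = (0:A) := neg_eq_zero.mpr h2; rw [← h2]; abel)
  rw [tw_eq_genD, tw_eq_genD]
  exact genD_sq (twStar l r H T) (lTmap mul r H T) (rTmap mul l H T)
    hA1 hA2 hA3 hA4 n ⇑f u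
end

section
/- Let K be a field of characteristic 0, A an associative algebra over K, M an A-bimodule, H a Hochschild 2-cocycle, T : M → A an H-twisted Rota-Baxter operator, and T₁ : M → A a K-linear map. Then T_t = T + tT₁ is an H-twisted Rota-Baxter operator for every t ∈ K if and only if the following three identities hold for all u,v ∈ M: (i) T(u)T₁(v) + T₁(u)T(v) = T₁(u·T(v) + T(u)·v + H(Tu,Tv)) + T(u·T₁(v) + T₁(u)·v + H(Tu, T₁v) + H(T₁u, Tv)); (ii) T₁(u)T₁(v) = T(H(T₁u, T₁v)) + T₁(u·T₁(v) + T₁(u)·v + H(Tu, T₁v) + H(T₁u, Tv)); (iii) T₁(H(T₁u, T₁v)) = 0. -/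
private lemma vanish_cubic {K M : Type*} [Field K] [CharZero K]
    [AddCommGroup M] [Module K M] {a b c : M}
    (h : ∀ t : K, t • a + (t * t) • b + (t * t * t) • c = 0) :
    a = 0 ∧ b = 0 ∧ c = 0 := by
  have h1 := h 1; have h2 := h 2; have h3 := h 3
  have ha : (6 : K) • a = 0 := by
    calc (6 : K) • a
        = (18 : K) • ((1:K) • a + ((1:K)*1) • b + ((1:K)*1*1) • c)
          - (9 : K) • ((2:K) • a + ((2:K)*2) • b + ((2:K)*2*2) • c)
          + (2 : K) • ((3:K) • a + ((3:K)*3) • b + ((3:K)*3*3) • c) := by module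
      _ = 0 := by rw [h1, h2, h3]; simp
  have hb : (2 : K) • b = 0 := by
    calc (2 : K) • b
        = (-5 : K) • ((1:K) • a + ((1:K)*1) • b + ((1:K)*1*1) • c)
          + (4 : K) • ((2:K) • a + ((2:K)*2) • b + ((2:K)*2*2) • c)
          - (1 : K) • ((3:K) • a + ((3:K)*3) • b + ((3:K)*3*3) • c) := by module
      _ = 0 := by rw [h1, h2, h3]; simp
  have hc : (6 : K) • c = 0 := by
    calc (6 : K) • c
        = (3 : K) • ((1:K) • a + ((1:K)*1) • b + ((1:K)*1*1) • c)
          - (3 : K) • ((2:K) • a + ((2:K)*2) • b + ((2:K)*2*2) • c)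
          + (1 : K) • ((3:K) • a + ((3:K)*3) • b + ((3:K)*3*3) • c) := by module
      _ = 0 := by rw [h1, h2, h3]; simp
  refine ⟨(smul_eq_zero.mp ha).resolve_left (by norm_num),
    (smul_eq_zero.mp hb).resolve_left (by norm_num),
    (smul_eq_zero.mp hc).resolve_left (by norm_num)⟩

/-- T_t = T + tT₁ is an H-twisted Rota-Baxter operator for every t ∈ K if and
only if the three deformation identities hold. -/
theorem stmt_16
    (K : Type*) [Field K] [CharZero K]
    (A : Type*) [AddCommGroup A] [Module K A]
    (M : Type*) [AddCommGroup M] [Module K M]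
    (mul : A →ₗ[K] A →ₗ[K] A)
    (hmul : ∀ a b c : A, mul (mul a b) c = mul a (mul b c))
    (l : A →ₗ[K] M →ₗ[K] M) (r : M →ₗ[K] A →ₗ[K] M)
    (hlm : ∀ (a b : A) (u : M), l (mul a b) u = l a (l b u))
    (hlr : ∀ (a : A) (u : M) (b : A), r (l a u) b = l a (r u b))
    (hrm : ∀ (u : M) (a b : A), r (r u a) b = r u (mul a b))
    (H : A →ₗ[K] A →ₗ[K] M)
    (hH : ∀ a b c : A, l a (H b c) - H (mul a b) c + H a (mul b c) - r (H a b) c = 0)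
    (T : M →ₗ[K] A)
    (hT : ∀ u v : M,
      mul (T u) (T v) = T (r u (T v) + l (T u) v + H (T u) (T v)))
    (T₁ : M →ₗ[K] A)
    (Tt : K → M → A)
    (hTt : ∀ (t : K) (u : M), Tt t u = T u + t • T₁ u) :
    (∀ (t : K) (u v : M),
        mul (Tt t u) (Tt t v)
          = Tt t (r u (Tt t v) + l (Tt t u) v + H (Tt t u) (Tt t v)))
      ↔ ((∀ u v : M,
            mul (T u) (T₁ v) + mul (T₁ u) (T v)
              = T₁ (r u (T v) + l (T u) v + H (T u) (T v))
                + T (r u (T₁ v) + l (T₁ u) v + H (T u) (T₁ v) + H (T₁ u) (T v)))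
          ∧ (∀ u v : M,
              mul (T₁ u) (T₁ v)
                = T (H (T₁ u) (T₁ v))
                  + T₁ (r u (T₁ v) + l (T₁ u) v + H (T u) (T₁ v) + H (T₁ u) (T v)))
          ∧ (∀ u v : M, T₁ (H (T₁ u) (T₁ v)) = 0)) := by
  have expand : ∀ (t : K) (u v : M),
      mul (Tt t u) (Tt t v)
        - Tt t (r u (Tt t v) + l (Tt t u) v + H (Tt t u) (Tt t v))
      = (mul (T u) (T v) - T (r u (T v) + l (T u) v + H (T u) (T v)))
        + t • (mul (T u) (T₁ v) + mul (T₁ u) (T v)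
            - (T₁ (r u (T v) + l (T u) v + H (T u) (T v))
              + T (r u (T₁ v) + l (T₁ u) v + H (T u) (T₁ v) + H (T₁ u) (T v))))
        + (t * t) • (mul (T₁ u) (T₁ v)
            - (T (H (T₁ u) (T₁ v))
              + T₁ (r u (T₁ v) + l (T₁ u) v + H (T u) (T₁ v) + H (T₁ u) (T v))))
        + (t * t * t) • (- T₁ (H (T₁ u) (T₁ v))) := by
    intro t u v
    simp only [hTt, map_add, map_smul, LinearMap.add_apply, LinearMap.smul_apply]
    module
  constructor
  · intro hall
    have key : ∀ u v : M,
        (mul (T u) (T₁ v) + mul (T₁ u) (T v)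
            - (T₁ (r u (T v) + l (T u) v + H (T u) (T v))
              + T (r u (T₁ v) + l (T₁ u) v + H (T u) (T₁ v) + H (T₁ u) (T v))) = 0)
        ∧ (mul (T₁ u) (T₁ v)
            - (T (H (T₁ u) (T₁ v))
              + T₁ (r u (T₁ v) + l (T₁ u) v + H (T u) (T₁ v) + H (T₁ u) (T v))) = 0)
        ∧ (- T₁ (H (T₁ u) (T₁ v)) = 0) := by
      intro u v
      apply vanish_cubic (K := K)
      intro t
      have e := expand t u v
      rw [sub_eq_zero.mpr (hall t u v), sub_eq_zero.mpr (hT u v)] at e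
      rw [zero_add] at e
      exact e.symm
    exact ⟨fun u v => sub_eq_zero.mp ((key u v).1),
      fun u v => sub_eq_zero.mp ((key u v).2.1),
      fun u v => neg_eq_zero.mp ((key u v).2.2)⟩
  · rintro ⟨h1, h2, h3⟩ t u v
    rw [← sub_eq_zero, expand t u v, sub_eq_zero.mpr (hT u v),
      sub_eq_zero.mpr (h1 u v), sub_eq_zero.mpr (h2 u v), h3 u v]
    simp
end

section
/- Let A be an associative algebra over a field K of characteristic 0 and R : A → A a Reynolds operator. Then the bilinear product a * b = R(a)b + aR(b) − R(a)R(b) is an associative multiplication on A. -/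
/-- For a Reynolds operator R on A, the product
a * b = R(a)b + aR(b) - R(a)R(b) is associative. -/
theorem stmt_18
    (K : Type*) [Field K] [CharZero K]
    (A : Type*) [AddCommGroup A] [Module K A]
    (mul : A →ₗ[K] A →ₗ[K] A)
    (hmul : ∀ a b c : A, mul (mul a b) c = mul a (mul b c))
    (R : A →ₗ[K] A)
    (hR : ∀ a b : A,
      mul (R a) (R b) = R (mul a (R b) + mul (R a) b - mul (R a) (R b)))
    (star : A → A → A)
    (hstar : ∀ a b : A,
      star a b = mul (R a) b + mul a (R b) - mul (R a) (R b)) :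
    ∀ a b c : A, star (star a b) c = star a (star b c) := by
  have key : ∀ a b : A,
      R (mul (R a) b + mul a (R b) - mul (R a) (R b)) = mul (R a) (R b) := by
    intro a b
    rw [add_comm (mul (R a) b) (mul a (R b))]
    exact (hR a b).symm
  intro a b c
  simp only [hstar, key, map_add, map_sub, LinearMap.add_apply, LinearMap.sub_apply]
  simp only [hmul]
  abel
end

section
/- Let A be an associative algebra over a field K of characteristic 0, R : A → A a Reynolds operator, and let (A,*) denote the associative algebra with product a * b = R(a)b + aR(b) − R(a)R(b). Define l : A × A → A and r : A × A → A by l(a,b) = R(a)b + R(R(a)b) − R(ab) and r(b,a) = bR(a) + R(bR(a)) − R(ba). Then (l,r) is an (A,*)-bimodule structure on the vector space A; i.e., for all a,a' ∈ (A,*) and b ∈ A: l(a*a', b) = l(a, l(a',b)); r(l(a,b), a') = l(a, r(b,a')); and r(r(b,a), a') = r(b, a*a'). -/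
/-- For a Reynolds operator R on A, the maps l(a,b) = R(a)b + R(R(a)b) - R(ab)
and r(b,a) = bR(a) + R(bR(a)) - R(ba) define an (A,*)-bimodule structure on A,
where a * b = R(a)b + aR(b) - R(a)R(b). -/
theorem stmt_19
    (K : Type*) [Field K] [CharZero K]
    (A : Type*) [AddCommGroup A] [Module K A]
    (mul : A →ₗ[K] A →ₗ[K] A)
    (hmul : ∀ a b c : A, mul (mul a b) c = mul a (mul b c))
    (R : A →ₗ[K] A)
    (hR : ∀ a b : A,
      mul (R a) (R b) = R (mul a (R b) + mul (R a) b - mul (R a) (R b)))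
    (star : A → A → A)
    (hstar : ∀ a b : A,
      star a b = mul (R a) b + mul a (R b) - mul (R a) (R b))
    (lR : A → A → A) (rR : A → A → A)
    (hlR : ∀ a b : A, lR a b = mul (R a) b + R (mul (R a) b) - R (mul a b))
    (hrR : ∀ b a : A, rR b a = mul b (R a) + R (mul b (R a)) - R (mul b a)) :
    (∀ a a' b : A, lR (star a a') b = lR a (lR a' b))
      ∧ (∀ a b a' : A, rR (lR a b) a' = lR a (rR b a'))
      ∧ (∀ b a a' : A, rR (rR b a) a' = rR b (star a a')) := by
  have key : ∀ x y : A, R (mul (R x) (R y))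
      = R (mul x (R y)) + R (mul (R x) y) - mul (R x) (R y) := by
    intro x y
    have h := hR x y
    rw [map_sub, map_add] at h
    rw [eq_sub_iff_add_eq] at h ⊢
    rw [← h]
    abel
  refine ⟨?_, ?_, ?_⟩ <;> intro a b c <;>
    simp only [hlR, hrR, hstar, map_add, map_sub, LinearMap.add_apply,
      LinearMap.sub_apply, hmul, key] <;>
    abel
end
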